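/- arXiv:2204.04858 — 2 statements merged into one kernel-verified Lean document; each statement's English description precedes it below -/
import Mathlib

section
/- Let X be a real-valued random variable and a, b > 0 such that for every τ ≥ 2 the moment bound ‖X‖_τ ≤ √τ·a + τ·b holds, where ‖X‖_τ = (E|X|^τ)^{1/τ}. Then for every ζ ∈ (0,1), with probability at least 1 − ζ, |X| ≤ e·( a·√(log(e/ζ)) + b·log(e/ζ) ). -/
open MeasureTheory Real
open scoped ENNReal NNReal

noncomputable section

/-! Markov's inequality for `|X|^τ` at `τ = L := log(e/ζ)` bounds the probability that `|X|`
exceeds `e·‖X‖_τ ≤ e(a√L + bL)` by `e^{-L} = ζ/e`. The moment bound is only available for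
`τ ≥ 2`, so for `L < 2` one uses `τ = 2` instead, where `L ∈ [1, 2]` still leaves enough room:
the resulting bound `4/(e²L)` is at most `e^{1-L} = ζ`. -/

theorem measure_lt_norm_le_rpow_div {Ω E : Type*} [MeasurableSpace Ω] [NormedAddCommGroup E]
    {μ : Measure Ω} {f : Ω → E} (hf : AEStronglyMeasurable f μ) {p t C : ℝ} (hp : 0 < p)
    (ht : 0 < t) (hC₀ : 0 ≤ C) (hC : eLpNorm f (ENNReal.ofReal p) μ ≤ ENNReal.ofReal C) :
    μ {ω | t < ‖f ω‖} ≤ ENNReal.ofReal ((C / t) ^ p) := by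
  have hmarkov := meas_ge_le_mul_pow_eLpNorm_enorm μ (ENNReal.ofReal_pos.2 hp).ne'
    ENNReal.ofReal_ne_top hf (ENNReal.ofReal_pos.2 ht).ne' (by simp)
  rw [ENNReal.toReal_ofReal hp.le] at hmarkov
  calc μ {ω | t < ‖f ω‖}
      ≤ μ {ω | ENNReal.ofReal t ≤ ‖f ω‖ₑ} := measure_mono fun ω hω => by
        show ENNReal.ofReal t ≤ ‖f ω‖ₑ
        rw [← ofReal_norm]; exact ENNReal.ofReal_le_ofReal hω.le
    _ ≤ (ENNReal.ofReal t)⁻¹ ^ p * ENNReal.ofReal C ^ p := by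
        refine hmarkov.trans ?_
        gcongr
    _ = ENNReal.ofReal ((C / t) ^ p) := by
        rw [← ENNReal.ofReal_inv_of_pos ht, ← ENNReal.mul_rpow_of_nonneg _ _ hp.le,
          ← ENNReal.ofReal_mul (by positivity), inv_mul_eq_div,
          ENNReal.ofReal_rpow_of_nonneg (by positivity) hp.le]

theorem moment_ratio_rpow_self_eq {a b L : ℝ} (ha : 0 < a) (hb : 0 ≤ b) (hL : 0 < L) :
    ((√L * a + L * b) / (exp 1 * (a * √L + b * L))) ^ L = exp (-L) := by
  have : 0 < a * √L + b * L := by positivity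
  rw [show (√L * a + L * b) / (exp 1 * (a * √L + b * L)) = (exp 1)⁻¹ by field_simp,
    inv_rpow (exp_pos 1).le, exp_one_rpow, exp_neg]

theorem moment_ratio_two_le {a b L : ℝ} (ha : 0 < a) (hb : 0 ≤ b) (hL : 1 ≤ L) :
    (√2 * a + 2 * b) / (exp 1 * (a * √L + b * L)) ≤ 2 / (exp 1 * √L) := by
  have hs2 : √2 ≤ 2 := by
    rw [sqrt_le_left (by norm_num)]; norm_num
  have hsLL : √L ≤ L := by
    rw [sqrt_le_left (by linarith)]; nlinarith
  have key : (√2 * a + 2 * b) * √L ≤ 2 * (a * √L + b * L) := by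
    nlinarith [mul_le_mul_of_nonneg_right hs2 (by positivity : 0 ≤ a * √L),
      mul_le_mul_of_nonneg_left hsLL hb]
  rw [div_le_div_iff₀ (by positivity) (by positivity)]
  nlinarith [mul_le_mul_of_nonneg_left key (exp_pos 1).le]

theorem four_div_exp_one_sq_mul_le {L : ℝ} (h1 : 1 ≤ L) (h2 : L ≤ 2) :
    4 / (exp 1 ^ 2 * L) ≤ exp (1 - L) := by
  have hexp : 3 - L ≤ exp 1 * exp (1 - L) := by
    rw [← exp_add]; linarith [add_one_le_exp (1 + (1 - L))]
  have he : 2 < exp 1 := lt_trans (by norm_num) exp_one_gt_d9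
  rw [div_le_iff₀ (by positivity)]
  have hL3 : 2 ≤ L * (3 - L) := by nlinarith [mul_nonneg (sub_nonneg.2 h1) (sub_nonneg.2 h2)]
  nlinarith [mul_le_mul_of_nonneg_left hexp (by positivity : 0 ≤ exp 1 * L)]

theorem moment_ratio_rpow_max_le {a b L : ℝ} (ha : 0 < a) (hb : 0 ≤ b) (hL : 1 ≤ L) :
    ((√(max 2 L) * a + max 2 L * b) / (exp 1 * (a * √L + b * L))) ^ max 2 L ≤ exp (1 - L) := by
  rcases le_total 2 L with h2L | hL2
  · rw [max_eq_right h2L, moment_ratio_rpow_self_eq ha hb (by linarith)]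
    exact exp_le_exp.2 (by linarith)
  · rw [max_eq_left hL2, show (2 : ℝ) = (2 : ℕ) by norm_num, rpow_natCast, Nat.cast_ofNat]
    calc ((√2 * a + 2 * b) / (exp 1 * (a * √L + b * L))) ^ 2
        ≤ (2 / (exp 1 * √L)) ^ 2 :=
          pow_le_pow_left₀ (by positivity) (moment_ratio_two_le ha hb hL) 2
      _ = 4 / (exp 1 ^ 2 * L) := by
          rw [div_pow, mul_pow, sq_sqrt (by linarith)]; norm_num
      _ ≤ exp (1 - L) := four_div_exp_one_sq_mul_le hL hL2

/-- **From moment bounds to a high-probability bound** (Lemma 3, from Bousquet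
et al.): if `‖X‖_τ ≤ √τ·a + τ·b` for every `τ ≥ 2`, then for every `ζ ∈ (0,1)`,
with probability at least `1 − ζ`,
`|X| ≤ e·(a·√(log(e/ζ)) + b·log(e/ζ))`. -/
theorem moment_bound_to_tail_bound
    {Ω : Type*} [MeasurableSpace Ω] (μ : Measure Ω) [IsProbabilityMeasure μ]
    (X : Ω → ℝ) (hX : Measurable X) (a b : ℝ) (ha : 0 < a) (hb : 0 < b)
    (hmom : ∀ τ : ℝ, 2 ≤ τ →
      eLpNorm X (ENNReal.ofReal τ) μ ≤ ENNReal.ofReal (Real.sqrt τ * a + τ * b))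
    (ζ : ℝ) (hζ : ζ ∈ Set.Ioo (0 : ℝ) 1) :
    1 - ENNReal.ofReal ζ ≤
      μ {ω | |X ω| ≤
        Real.exp 1 *
          (a * Real.sqrt (Real.log (Real.exp 1 / ζ)) + b * Real.log (Real.exp 1 / ζ))} := by
  obtain ⟨hζ0, hζ1⟩ := hζ
  set L := log (exp 1 / ζ)
  have hζL : exp (1 - L) = ζ := by
    rw [exp_sub, exp_log (by positivity)]; field_simp
  have hL : 1 ≤ L :=
    (le_log_iff_exp_le (by positivity)).2 (le_div_self (exp_pos 1).le hζ0 hζ1.le)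
  set t := exp 1 * (a * √L + b * L)
  set τ := max 2 L
  have hτ : 2 ≤ τ := le_max_left 2 L
  have htail : μ {ω | |X ω| ≤ t}ᶜ ≤ ENNReal.ofReal ζ := by
    calc μ {ω | |X ω| ≤ t}ᶜ = μ {ω | t < ‖X ω‖} := by
          congr 1; ext ω; simp [Real.norm_eq_abs]
      _ ≤ ENNReal.ofReal (((√τ * a + τ * b) / t) ^ τ) :=
          measure_lt_norm_le_rpow_div hX.aestronglyMeasurable (by linarith) (by positivity)
            (by positivity) (hmom τ hτ)
      _ ≤ ENNReal.ofReal ζ :=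
          ENNReal.ofReal_le_ofReal (hζL ▸ moment_ratio_rpow_max_le ha hb.le hL)
  have hmeas : MeasurableSet {ω | |X ω| ≤ t} := measurableSet_le hX.abs measurable_const
  rw [← compl_compl {ω | |X ω| ≤ t}, prob_compl_eq_one_sub hmeas.compl]
  exact tsub_le_tsub_left htail 1

end
end

section
/- Suppose ℓ : W × V × Z → [0,∞) is G-Lipschitz and A : Z^n → W × V is a γ-argument-stable map. Define h : Z^n → [0,∞) by h(S) = E_{z∼P}[ ℓ(A_w(S), A_v(S); z)² ] and h_i(S) = sup_{z_i' ∈ Z} h(z_1,...,z_{i-1}, z_i', z_{i+1},...,z_n). Then Σ_{i=1}^n ( h(S) − h_i(S) )² ≤ 8·G²·n·γ²·h(S) + 2·G⁴·n·γ⁴ for every S ∈ Z^n; that is, h is (8G²nγ², 2G⁴nγ⁴)-weakly self-bounded with witnesses h_i ≥ h. -/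
open MeasureTheory Real Set
open scoped BigOperators

noncomputable section

/-- Two datasets are adjacent if they differ in at most one entry. -/
def Adjacent {Z : Type*} {n : ℕ} (S S' : Fin n → Z) : Prop :=
  ∃ i : Fin n, ∀ j : Fin n, j ≠ i → S j = S' j

/-- `h(S) = E_{z∼P}[ ℓ(A_w(S), A_v(S); z)² ]`. -/
def hFun {Z : Type*} [MeasurableSpace Z] (P : Measure Z) {p n : ℕ}
    (ℓ : EuclideanSpace ℝ (Fin p) → EuclideanSpace ℝ (Fin p) → Z → ℝ)
    (A : (Fin n → Z) → EuclideanSpace ℝ (Fin p) × EuclideanSpace ℝ (Fin p))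
    (S : Fin n → Z) : ℝ :=
  ∫ z, (ℓ (A S).1 (A S).2 z) ^ 2 ∂P

/-- `h_i(S) = sup_{z_i' ∈ Z} h(z_1, …, z_{i−1}, z_i', z_{i+1}, …, z_n)`. -/
def hIFun {Z : Type*} [MeasurableSpace Z] (P : Measure Z) {p n : ℕ}
    (ℓ : EuclideanSpace ℝ (Fin p) → EuclideanSpace ℝ (Fin p) → Z → ℝ)
    (A : (Fin n → Z) → EuclideanSpace ℝ (Fin p) × EuclideanSpace ℝ (Fin p))
    (i : Fin n) (S : Fin n → Z) : ℝ :=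
  sSup (Set.range fun z' : Z => hFun P ℓ A (Function.update S i z'))

/-!
Stability moves `(A_w(S), A_v(S))` by at most `γ` when one sample is replaced, so the
Lipschitz loss moves pointwise by at most `c = Gγ`, and `ℓ' ≤ ℓ + c` with `ℓ' ≥ 0` gives
`ℓ'² ≤ ℓ² + 2cℓ + c²`. Integrating and using Jensen, `(E ℓ)² ≤ h`, every `h_i(S)` lies in
`[h(S), h(S) + 2c·E ℓ + c²]`, and `(2c·E ℓ + c²)² ≤ 8c²·h(S) + 2c⁴`.
-/

open Function

lemma abs_sub_le_of_norm_gradient_le {E : Type*} [NormedAddCommGroup E]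
    [InnerProductSpace ℝ E] [CompleteSpace E] {f : E → ℝ} {G : ℝ}
    (hf : Differentiable ℝ f) (hbound : ∀ x, ‖gradient f x‖ ≤ G) (x y : E) :
    |f x - f y| ≤ G * ‖x - y‖ := by
  have hfderiv : ∀ z ∈ univ, ‖fderiv ℝ f z‖ ≤ G := fun z _ => by
    simpa only [← toDual_gradient, LinearIsometryEquiv.norm_map] using hbound z
  simpa only [Real.norm_eq_abs] using convex_univ.norm_image_sub_le_of_norm_fderiv_le
    (fun z _ => hf z) hfderiv (mem_univ y) (mem_univ x)

lemma abs_sub_le_of_norm_partial_gradient_le {E F : Type*}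
    [NormedAddCommGroup E] [InnerProductSpace ℝ E] [CompleteSpace E]
    [NormedAddCommGroup F] [InnerProductSpace ℝ F] [CompleteSpace F] {f : E → F → ℝ} {G : ℝ}
    (hd₁ : ∀ y, Differentiable ℝ fun x => f x y) (hd₂ : ∀ x, Differentiable ℝ (f x))
    (hb₁ : ∀ x y, ‖gradient (fun x' => f x' y) x‖ ≤ G) (hb₂ : ∀ x y, ‖gradient (f x) y‖ ≤ G)
    (x x' : E) (y y' : F) :
    |f x y - f x' y'| ≤ G * (‖x - x'‖ + ‖y - y'‖) :=
  calc |f x y - f x' y'| ≤ |f x y - f x' y| + |f x' y - f x' y'| := abs_sub_le _ _ _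
    _ ≤ G * ‖x - x'‖ + G * ‖y - y'‖ :=
      add_le_add (abs_sub_le_of_norm_gradient_le (hd₁ y) (hb₁ · y) x x')
        (abs_sub_le_of_norm_gradient_le (hd₂ x') (hb₂ x') y y')
    _ = G * (‖x - x'‖ + ‖y - y'‖) := (mul_add _ _ _).symm

section Integrals

variable {Ω : Type*} [MeasurableSpace Ω] {μ : Measure Ω} [IsProbabilityMeasure μ]

lemma sq_integral_le_integral_sq {X : Ω → ℝ} (hX : MemLp X 2 μ) :
    (∫ ω, X ω ∂μ) ^ 2 ≤ ∫ ω, X ω ^ 2 ∂μ := by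
  have hvar := ProbabilityTheory.variance_nonneg X μ
  rw [ProbabilityTheory.variance_eq_sub hX] at hvar
  simpa only [Pi.pow_apply, sub_nonneg] using hvar

lemma integral_sq_le_of_le_add {f g : Ω → ℝ} {c : ℝ} (hf : MemLp f 2 μ)
    (hg : Integrable (fun ω => g ω ^ 2) μ) (hg₀ : ∀ ω, 0 ≤ g ω) (hgf : ∀ ω, g ω ≤ f ω + c) :
    ∫ ω, g ω ^ 2 ∂μ ≤ ∫ ω, f ω ^ 2 ∂μ + 2 * c * ∫ ω, f ω ∂μ + c ^ 2 := by
  have hf₁ : Integrable f μ := hf.integrable one_le_two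
  have hf₂ : Integrable (fun ω => f ω ^ 2) μ := hf.integrable_sq
  have hf₁₂ : Integrable (fun ω => f ω ^ 2 + 2 * c * f ω) μ := hf₂.add (hf₁.const_mul _)
  calc ∫ ω, g ω ^ 2 ∂μ ≤ ∫ ω, (f ω ^ 2 + 2 * c * f ω + c ^ 2) ∂μ :=
        integral_mono hg (hf₁₂.add (integrable_const _)) fun ω => by
          nlinarith [hg₀ ω, hgf ω]
    _ = ∫ ω, f ω ^ 2 ∂μ + 2 * c * ∫ ω, f ω ∂μ + c ^ 2 := by
      rw [integral_add hf₁₂ (integrable_const _), integral_add hf₂ (hf₁.const_mul _),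
        integral_const_mul, integral_const]
      simp

end Integrals

lemma sq_sub_le_of_le_of_le_add {h x c m : ℝ} (hm : m ^ 2 ≤ h) (hx : h ≤ x)
    (hx' : x ≤ h + (2 * c * m + c ^ 2)) :
    (h - x) ^ 2 ≤ 8 * c ^ 2 * h + 2 * c ^ 4 := by
  nlinarith [sq_nonneg (2 * c * m - c ^ 2), mul_le_mul_of_nonneg_left hm (sq_nonneg c)]

lemma sSup_range_update_mem_Icc {ι Z : Type*} [DecidableEq ι] {f : (ι → Z) → ℝ}
    {S : ι → Z} {i : ι} {K : ℝ} (hf : ∀ z, f (update S i z) ≤ f S + K) :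
    sSup (range fun z => f (update S i z)) ∈ Icc (f S) (f S + K) := by
  have hmem : f S ∈ range fun z => f (update S i z) := ⟨S i, by simp only [update_eq_self]⟩
  have hbdd : BddAbove (range fun z => f (update S i z)) := ⟨f S + K, forall_mem_range.2 hf⟩
  exact ⟨le_csSup hbdd hmem, csSup_le ⟨_, hmem⟩ (forall_mem_range.2 hf)⟩

lemma adjacent_update {Z : Type*} {n : ℕ} (S : Fin n → Z) (i : Fin n) (z : Z) :
    Adjacent S (update S i z) :=
  ⟨i, fun _ hj => (update_of_ne hj _ _).symm⟩

theorem hFun_weakly_self_bounded_general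
    {Z : Type*} [MeasurableSpace Z] (P : Measure Z) [IsProbabilityMeasure P]
    {p n : ℕ} (G γ : ℝ) (hG : 0 < G)
    (ℓ : EuclideanSpace ℝ (Fin p) → EuclideanSpace ℝ (Fin p) → Z → ℝ)
    (hpos : ∀ w v z, 0 ≤ ℓ w v z)
    (hdW : ∀ v z, Differentiable ℝ (fun w => ℓ w v z))
    (hdV : ∀ w z, Differentiable ℝ (fun v => ℓ w v z))
    (hlipW : ∀ w v z, ‖gradient (fun w' => ℓ w' v z) w‖ ≤ G)
    (hlipV : ∀ w v z, ‖gradient (fun v' => ℓ w v' z) v‖ ≤ G)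
    (hmeas : ∀ w v, Measurable fun z => ℓ w v z)
    (hint : ∀ w v, Integrable (fun z => (ℓ w v z) ^ 2) P)
    (A : (Fin n → Z) → EuclideanSpace ℝ (Fin p) × EuclideanSpace ℝ (Fin p))
    (hstab : ∀ S S' : Fin n → Z, Adjacent S S' →
      ‖(A S).1 - (A S').1‖ + ‖(A S).2 - (A S').2‖ ≤ γ) :
    ∀ S : Fin n → Z,
      (∀ i : Fin n, hFun P ℓ A S ≤ hIFun P ℓ A i S) ∧
      ∑ i : Fin n, (hFun P ℓ A S - hIFun P ℓ A i S) ^ 2 ≤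
        8 * G ^ 2 * n * γ ^ 2 * hFun P ℓ A S + 2 * G ^ 4 * n * γ ^ 4 := by
  intro S
  have hL2 : ∀ w v, MemLp (fun z => ℓ w v z) 2 P := fun w v =>
    (memLp_two_iff_integrable_sq (hmeas w v).aestronglyMeasurable).2 (hint w v)
  have hstep : ∀ S', Adjacent S S' → hFun P ℓ A S' ≤
      hFun P ℓ A S + (2 * (G * γ) * (∫ z, ℓ (A S).1 (A S).2 z ∂P) + (G * γ) ^ 2) := by
    intro S' hadj
    rw [← add_assoc]
    refine integral_sq_le_of_le_add (hL2 _ _) (hint _ _) (hpos _ _) fun z => ?_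
    have hlip := abs_sub_le_of_norm_partial_gradient_le (f := fun w v => ℓ w v z)
      (hdW · z) (hdV · z) (hlipW · · z) (hlipV · · z) (A S).1 (A S').1 (A S).2 (A S').2
    linarith [neg_abs_le (ℓ (A S).1 (A S).2 z - ℓ (A S').1 (A S').2 z),
      mul_le_mul_of_nonneg_left (hstab S S' hadj) hG.le]
  have hbounds : ∀ i, hIFun P ℓ A i S ∈ Icc (hFun P ℓ A S)
      (hFun P ℓ A S + (2 * (G * γ) * (∫ z, ℓ (A S).1 (A S).2 z ∂P) + (G * γ) ^ 2)) := fun i =>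
    sSup_range_update_mem_Icc fun z => hstep _ (adjacent_update S i z)
  have hjensen := sq_integral_le_integral_sq (hL2 (A S).1 (A S).2)
  refine ⟨fun i => (hbounds i).1, ?_⟩
  calc ∑ i : Fin n, (hFun P ℓ A S - hIFun P ℓ A i S) ^ 2
      ≤ ∑ _i : Fin n, (8 * (G * γ) ^ 2 * hFun P ℓ A S + 2 * (G * γ) ^ 4) :=
        Finset.sum_le_sum fun i _ =>
          sq_sub_le_of_le_of_le_add hjensen (hbounds i).1 (hbounds i).2
    _ = 8 * G ^ 2 * n * γ ^ 2 * hFun P ℓ A S + 2 * G ^ 4 * n * γ ^ 4 := by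
      simp only [Finset.sum_const, Finset.card_univ, Fintype.card_fin, nsmul_eq_mul]
      ring

/-- **`h` is weakly self-bounded** (part of the proof of Theorem 3(a)): if `ℓ` is
nonnegative and `G`-Lipschitz and `A` is `γ`-argument-stable, then
`Σ_{i=1}^n (h(S) − h_i(S))² ≤ 8G²nγ²·h(S) + 2G⁴nγ⁴`, with witnesses `h_i ≥ h`;
that is, `h` is `(8G²nγ², 2G⁴nγ⁴)`-weakly self-bounded. -/
theorem hFun_weakly_self_bounded
    {Z : Type*} [MeasurableSpace Z] (P : Measure Z) [IsProbabilityMeasure P]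
    {p n : ℕ} (G γ : ℝ) (hG : 0 < G) (hγ : 0 < γ)
    (ℓ : EuclideanSpace ℝ (Fin p) → EuclideanSpace ℝ (Fin p) → Z → ℝ)
    (hpos : ∀ w v z, 0 ≤ ℓ w v z)
    (hdW : ∀ v z, Differentiable ℝ (fun w => ℓ w v z))
    (hdV : ∀ w z, Differentiable ℝ (fun v => ℓ w v z))
    (hlipW : ∀ w v z, ‖gradient (fun w' => ℓ w' v z) w‖ ≤ G)
    (hlipV : ∀ w v z, ‖gradient (fun v' => ℓ w v' z) v‖ ≤ G)
    (hmeas : ∀ w v, Measurable fun z => ℓ w v z)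
    (hint : ∀ w v, Integrable (fun z => (ℓ w v z) ^ 2) P)
    (A : (Fin n → Z) → EuclideanSpace ℝ (Fin p) × EuclideanSpace ℝ (Fin p))
    (hstab : ∀ S S' : Fin n → Z, Adjacent S S' →
      ‖(A S).1 - (A S').1‖ + ‖(A S).2 - (A S').2‖ ≤ γ) :
    ∀ S : Fin n → Z,
      (∀ i : Fin n, hFun P ℓ A S ≤ hIFun P ℓ A i S) ∧
      ∑ i : Fin n, (hFun P ℓ A S - hIFun P ℓ A i S) ^ 2 ≤
        8 * G ^ 2 * n * γ ^ 2 * hFun P ℓ A S + 2 * G ^ 4 * n * γ ^ 4 :=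
  hFun_weakly_self_bounded_general P G γ hG ℓ hpos hdW hdV hlipW hlipV hmeas hint A hstab
end
end
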